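/- Let n be a positive integer with divisors a and b, g = gcd(a,b), n' = n/g, a' = a/g, b' = b/g, and suppose n' is odd or a'b' is even. Let m̃₃ be the largest divisor of n'/(a'b') coprime to a'b'. Then atom(a) + atom(b) = ⋃_{d ∣ m̃₃} atom(g·d), a disjoint union over the divisors d of m̃₃. -/

import Mathlib

/-
An element `x` of `ZMod n` generates the same subgroup as a divisor `c` of `n` iff
`gcd(n, x.val) = c`, iff `x = c * s` for a unit `s`. Hence `atom(a) + atom(b)` is the set of
`g * (a' * s + b' * t)` with `s, t` units. For units `s, t` the number `w = a' * s + b' * t` is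
coprime to `a' * b'`, so its atom is that of `g * gcd(n', w)` with `gcd(n', w)` a divisor of `n'`
coprime to `a' * b'`, i.e. a divisor of `m̃₃`. Conversely every `y` coprime to `a' * b'` is
`a' * s + b' * t` with `s, t` units modulo `n'`: by the Chinese remainder theorem it suffices to
solve this modulo a prime power `p ^ k`, where one of `a', b'` is a unit, and if both are, then
`y - 1` or `y + 1` is a unit because `p` is odd; this is where `n'` odd or `a' * b'` even enters.
Units modulo `n'` lift to units modulo `n`.
-/

open AddSubgroup

theorem Nat.dvd_and_coprime_iff_dvd_of_isGreatest {M k m d : ℕ} (hM : M ≠ 0)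
    (hm : IsGreatest {d | d ∣ M ∧ d.Coprime k} m) : d ∣ M ∧ d.Coprime k ↔ d ∣ m := by
  refine ⟨fun ⟨hdM, hdk⟩ => ?_, fun h => ⟨h.trans hm.1.1, hm.1.2.coprime_dvd_left h⟩⟩
  -- `lcm d m` is again a divisor of `M` coprime to `k`, so it cannot exceed `m`
  have hl : d.lcm m ∣ M := Nat.lcm_dvd hdM hm.1.1
  have hlm : d.lcm m = m := le_antisymm
    (hm.2 ⟨hl, (hdk.mul_left hm.1.2).coprime_dvd_left (Nat.lcm_dvd_mul d m)⟩)
    (Nat.le_of_dvd (Nat.pos_of_ne_zero (ne_zero_of_dvd_ne_zero hM hl)) (Nat.dvd_lcm_right d m))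
  exact hlm ▸ Nat.dvd_lcm_left d m

theorem Nat.dvd_and_coprime_iff_dvd_of_isGreatest_div {n k m d : ℕ} (hn : n ≠ 0)
    (hk : k ∣ n) (hm : IsGreatest {d | d ∣ n / k ∧ d.Coprime k} m) :
    d ∣ n ∧ d.Coprime k ↔ d ∣ m := by
  have hkn := Nat.mul_div_cancel' hk
  rw [← Nat.dvd_and_coprime_iff_dvd_of_isGreatest (right_ne_zero_of_mul (hkn ▸ hn)) hm]
  exact and_congr_left fun hd => by rw [← hd.dvd_mul_left (n := n / k), hkn]

lemma exists_isUnit_mul_add_mul_eq_of_isUnit {R : Type*} [CommRing R] {a b y s : R}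
    (hb : IsUnit b) (hs : IsUnit s) (hys : IsUnit (y - a * s)) :
    ∃ s t : R, IsUnit s ∧ IsUnit t ∧ a * s + b * t = y := by
  refine ⟨s, ↑hb.unit⁻¹ * (y - a * s), hs, hb.unit⁻¹.isUnit.mul hys, ?_⟩
  rw [← mul_assoc, hb.mul_val_inv, one_mul, add_sub_cancel]

namespace ZMod

variable {n : ℕ}

lemma gcd_val_natCast (c : ℕ) : n.gcd (c : ZMod n).val = n.gcd c := by
  rw [val_natCast, Nat.gcd_comm, ← Nat.gcd_rec]

lemma mem_zmultiples_natCast_iff [NeZero n] {c : ℕ} (hc : c ∣ n) {x : ZMod n} :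
    x ∈ zmultiples (c : ZMod n) ↔ c ∣ x.val := by
  constructor
  · rintro ⟨k, rfl⟩
    rw [← natCast_eq_zero_iff, ← cast_eq_val, ← castHom_apply (h := hc), map_zsmul,
      map_natCast, natCast_self, smul_zero]
  · rintro ⟨q, hq⟩
    refine ⟨q, ?_⟩
    dsimp only
    rw [← natCast_zmod_val x, hq, natCast_zsmul, nsmul_eq_mul, Nat.cast_mul, mul_comm]

lemma zmultiples_eq_zmultiples_gcd_val [NeZero n] (x : ZMod n) :
    zmultiples x = zmultiples ((n.gcd x.val : ℕ) : ZMod n) := by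
  refine le_antisymm ?_ ?_
  · rw [zmultiples_le, mem_zmultiples_natCast_iff (Nat.gcd_dvd_left _ _)]
    exact Nat.gcd_dvd_right _ _
  · rw [zmultiples_le]
    refine ⟨Nat.gcdB n x.val, ?_⟩
    have hbezout := congrArg (fun z : ℤ => (z : ZMod n)) (Nat.gcd_eq_gcd_ab n x.val)
    push_cast [natCast_self, natCast_zmod_val] at hbezout
    dsimp only
    rw [hbezout, zero_mul, zero_add, zsmul_eq_mul, mul_comm]

lemma zmultiples_eq_zmultiples_iff_gcd_val_eq [NeZero n] {x y : ZMod n} :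
    zmultiples x = zmultiples y ↔ n.gcd x.val = n.gcd y.val := by
  refine ⟨fun h => ?_, fun h => by rw [zmultiples_eq_zmultiples_gcd_val x,
    zmultiples_eq_zmultiples_gcd_val y, h]⟩
  rw [zmultiples_eq_zmultiples_gcd_val x, zmultiples_eq_zmultiples_gcd_val y] at h
  have hx := Nat.gcd_dvd_left n x.val
  have hy := Nat.gcd_dvd_left n y.val
  have hxy := h ▸ mem_zmultiples ((n.gcd x.val : ℕ) : ZMod n)
  have hyx := h.symm ▸ mem_zmultiples ((n.gcd y.val : ℕ) : ZMod n)
  rw [mem_zmultiples_natCast_iff hy, val_natCast, Nat.dvd_mod_iff hy] at hxy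
  rw [mem_zmultiples_natCast_iff hx, val_natCast, Nat.dvd_mod_iff hx] at hyx
  exact Nat.dvd_antisymm hyx hxy

lemma zmultiples_eq_zmultiples_natCast_iff [NeZero n] {c : ℕ} (hc : c ∣ n) {x : ZMod n} :
    zmultiples x = zmultiples (c : ZMod n) ↔ n.gcd x.val = c := by
  rw [zmultiples_eq_zmultiples_iff_gcd_val_eq, gcd_val_natCast, Nat.gcd_eq_right hc]

lemma natCast_mul_eq_of_castHom_eq {N g m : ℕ} [NeZero N] (hN : g * m = N) {x y : ZMod N}
    (h : castHom (Dvd.intro_left g hN) (ZMod m) x = castHom (Dvd.intro_left g hN) (ZMod m) y) :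
    (g : ZMod N) * x = g * y := by
  subst hN
  rw [← natCast_zmod_val x, ← natCast_zmod_val y] at h ⊢
  rw [map_natCast, map_natCast, natCast_eq_natCast_iff] at h
  exact_mod_cast (natCast_eq_natCast_iff _ _ _).2 (h.mul_left' g)

lemma exists_unit_castHom_eq {N m : ℕ} [NeZero N] (h : m ∣ N) {x : ZMod m} (hx : IsUnit x) :
    ∃ s : (ZMod N)ˣ, castHom h (ZMod m) s = x :=
  let ⟨s, hs⟩ := unitsMap_surjective h hx.unit
  ⟨s, by rw [castHom_apply, ← unitsMap_val h, hs, hx.unit_spec]⟩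

lemma zmultiples_eq_zmultiples_natCast_iff_exists_unit [NeZero n] {c : ℕ} (hc : c ∣ n)
    {x : ZMod n} :
    zmultiples x = zmultiples (c : ZMod n) ↔ ∃ s : (ZMod n)ˣ, (c : ZMod n) * s = x := by
  rw [zmultiples_eq_zmultiples_natCast_iff hc]
  constructor
  · intro hx
    obtain ⟨m, hm⟩ := hc
    obtain ⟨q, hq⟩ : c ∣ x.val := hx ▸ Nat.gcd_dvd_right n x.val
    have hc0 : 0 < c := Nat.pos_of_ne_zero (by rintro rfl; exact NeZero.ne n (by simpa using hm))
    have hqm : IsUnit (q : ZMod m) := by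
      rw [isUnit_iff_coprime, Nat.coprime_comm]
      refine Nat.eq_of_mul_eq_mul_left hc0 ?_
      rw [← Nat.gcd_mul_left, ← hm, ← hq, hx, mul_one]
    obtain ⟨s, hs⟩ := exists_unit_castHom_eq (Dvd.intro_left c hm.symm) hqm
    refine ⟨s, ?_⟩
    rw [natCast_mul_eq_of_castHom_eq hm.symm (y := (q : ZMod n)) (by rw [hs, map_natCast]),
      ← Nat.cast_mul, ← hq, natCast_zmod_val]
  · rintro ⟨s, rfl⟩
    rw [← natCast_zmod_val (s : ZMod n), ← Nat.cast_mul, gcd_val_natCast, Nat.gcd_comm,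
      Nat.Coprime.gcd_mul_right_cancel _ (val_coe_unit_coprime s), Nat.gcd_eq_left hc]

lemma isUnit_iff_castHom_ne_zero {p k : ℕ} (hp : p.Prime) (hk : k ≠ 0) (x : ZMod (p ^ k)) :
    IsUnit x ↔ castHom (dvd_pow_self p hk) (ZMod p) x ≠ 0 := by
  have : NeZero (p ^ k) := ⟨pow_ne_zero k hp.ne_zero⟩
  rw [← natCast_zmod_val x, isUnit_natCast_iff_not_dvd_pow hp (Nat.pos_of_ne_zero hk),
    map_natCast, Ne, natCast_eq_zero_iff]

lemma exists_isUnit_mul_add_mul_eq_of_prime_pow {p k a b y : ℕ} (hp : p.Prime) (hk : k ≠ 0)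
    (hb : ¬ p ∣ b) (hy : p ∣ a → ¬ p ∣ y) (hp2 : ¬ p ∣ a → p ≠ 2) :
    ∃ s t : ZMod (p ^ k), IsUnit s ∧ IsUnit t ∧ (a : ZMod (p ^ k)) * s + b * t = y := by
  have : Fact p.Prime := ⟨hp⟩
  have hunit := isUnit_iff_castHom_ne_zero hp hk
  have hbu : IsUnit (b : ZMod (p ^ k)) := by
    rwa [hunit, map_natCast, Ne, natCast_eq_zero_iff]
  by_cases ha : p ∣ a
  · refine exists_isUnit_mul_add_mul_eq_of_isUnit hbu isUnit_one ?_
    rw [hunit, mul_one, map_sub, map_natCast, map_natCast, (natCast_eq_zero_iff a p).2 ha,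
      sub_zero, Ne, natCast_eq_zero_iff]
    exact hy ha
  · have hau : IsUnit (a : ZMod (p ^ k)) := by
      rwa [hunit, map_natCast, Ne, natCast_eq_zero_iff]
    -- `y + 1` and `y - 1` differ by `2`, which is nonzero modulo the odd prime `p`
    have hε : ∃ ε : ZMod (p ^ k), IsUnit ε ∧ IsUnit (y - ε) := by
      by_contra! h
      have h₁ := h 1 isUnit_one
      have h₂ := h (-1) isUnit_one.neg
      rw [hunit, not_not] at h₁ h₂
      have h2 : ((2 : ℕ) : ZMod p) = 0 := by
        have := congrArg₂ (· - ·) h₂ h₁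
        simp only [map_sub, map_neg, map_one, sub_zero] at this
        push_cast
        linear_combination this
      rw [natCast_eq_zero_iff] at h2
      exact hp2 ha ((Nat.prime_dvd_prime_iff_eq hp Nat.prime_two).1 h2)
    obtain ⟨ε, hε, hyε⟩ := hε
    refine exists_isUnit_mul_add_mul_eq_of_isUnit hbu (hau.unit⁻¹.isUnit.mul hε) ?_
    rwa [← mul_assoc, hau.mul_val_inv, one_mul]

lemma exists_isUnit_mul_add_mul_eq_of_coprime {m₁ m₂ a b y : ℕ} (hm : m₁.Coprime m₂)
    (h₁ : ∃ s t : ZMod m₁, IsUnit s ∧ IsUnit t ∧ (a : ZMod m₁) * s + b * t = y)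
    (h₂ : ∃ s t : ZMod m₂, IsUnit s ∧ IsUnit t ∧ (a : ZMod m₂) * s + b * t = y) :
    ∃ s t : ZMod (m₁ * m₂),
      IsUnit s ∧ IsUnit t ∧ (a : ZMod (m₁ * m₂)) * s + b * t = y := by
  obtain ⟨s₁, t₁, hs₁, ht₁, he₁⟩ := h₁
  obtain ⟨s₂, t₂, hs₂, ht₂, he₂⟩ := h₂
  let e := chineseRemainder hm
  refine ⟨e.symm (s₁, s₂), e.symm (t₁, t₂), (Prod.isUnit_iff.2 ⟨hs₁, hs₂⟩).map e.symm,
    (Prod.isUnit_iff.2 ⟨ht₁, ht₂⟩).map e.symm, e.injective ?_⟩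
  simp only [map_add, map_mul, map_natCast, RingEquiv.apply_symm_apply]
  exact Prod.ext he₁ he₂

theorem exists_isUnit_mul_add_mul_eq {a b y : ℕ} (hab : a.Coprime b) (hy : y.Coprime (a * b))
    {m : ℕ} (hm : m ≠ 0) (hcase : Odd m ∨ Even (a * b)) :
    ∃ s t : ZMod m, IsUnit s ∧ IsUnit t ∧ (a : ZMod m) * s + b * t = y := by
  induction m using Nat.recOnPosPrimePosCoprime with
  | zero => exact absurd rfl hm
  | one =>
    exact ⟨0, 0, isUnit_of_subsingleton _, isUnit_of_subsingleton _, Subsingleton.elim _ _⟩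
  | prime_pow p k hp hk =>
    have hy' : ∀ {c}, c ∣ a * b → p ∣ c → ¬ p ∣ y := fun hc hpc hpy =>
      hp.one_lt.ne' (Nat.eq_one_of_dvd_one (hy ▸ Nat.dvd_gcd hpy (hpc.trans hc)))
    have hp2 : ¬ p ∣ a → ¬ p ∣ b → p ≠ 2 := by
      rintro ha hb rfl
      rcases hcase with hodd | heven
      · exact (Nat.not_even_iff_odd.2 hodd) ((Nat.even_pow' hk.ne').2 even_two)
      · rcases (Nat.Prime.dvd_mul Nat.prime_two).1 (even_iff_two_dvd.1 heven) with h | h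
        exacts [ha h, hb h]
    by_cases hb : p ∣ b
    · have ha : ¬ p ∣ a := fun ha =>
        hp.one_lt.ne' (Nat.eq_one_of_dvd_one (hab ▸ Nat.dvd_gcd ha hb))
      obtain ⟨t, s, ht, hs, h⟩ := exists_isUnit_mul_add_mul_eq_of_prime_pow hp hk.ne' ha
        (hy' (dvd_mul_left b a)) (absurd hb)
      exact ⟨s, t, hs, ht, by rw [add_comm, h]⟩
    · exact exists_isUnit_mul_add_mul_eq_of_prime_pow hp hk.ne' hb (hy' (dvd_mul_right a b))
        (fun ha => hp2 ha hb)
  | coprime m₁ m₂ h₁ h₂ hm₁₂ ih₁ ih₂ =>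
    have hcase' : ∀ {m'}, m' ∣ m₁ * m₂ → Odd m' ∨ Even (a * b) :=
      fun hdvd => hcase.imp_left (Odd.of_dvd_nat · hdvd)
    exact exists_isUnit_mul_add_mul_eq_of_coprime hm₁₂
      (ih₁ (by omega) (hcase' (dvd_mul_right _ _))) (ih₂ (by omega) (hcase' (dvd_mul_left _ _)))

end ZMod

open ZMod

section SumOfAtoms

-- `g * n`, `g * a`, `g * b` stand for the paper's `n, a, b`, and `n, a, b` for `n', a', b'`.
variable {g n a b : ℕ} [NeZero (g * n)]

theorem exists_gcd_val_natCast_mul_add_natCast_mul (ha : a ∣ n) (hb : b ∣ n)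
    (hab : a.Coprime b) (s t : (ZMod (g * n))ˣ) :
    ∃ d, d ∣ n ∧ d.Coprime (a * b) ∧
      (g * n).gcd (((g * a : ℕ) : ZMod (g * n)) * s + ((g * b : ℕ) : ZMod (g * n)) * t).val =
        g * d := by
  have hS := val_coe_unit_coprime s
  have hT := val_coe_unit_coprime t
  set S := (s : ZMod (g * n)).val
  set T := (t : ZMod (g * n)).val
  have hsum : ((g * a : ℕ) : ZMod (g * n)) * s + ((g * b : ℕ) : ZMod (g * n)) * t =
      ((g * (a * S + b * T) : ℕ) : ZMod (g * n)) := by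
    rw [← natCast_zmod_val (s : ZMod (g * n)), ← natCast_zmod_val (t : ZMod (g * n))]
    push_cast
    ring
  have hw : (a * S + b * T).Coprime (a * b) := by
    refine Nat.Coprime.mul_right ?_ ?_
    · rw [add_comm, Nat.coprime_add_mul_left_left]
      exact hab.symm.mul_left (hT.coprime_dvd_right (ha.trans (dvd_mul_left n g)))
    · rw [Nat.coprime_add_mul_left_left]
      exact hab.mul_left (hS.coprime_dvd_right (hb.trans (dvd_mul_left n g)))
  refine ⟨n.gcd (a * S + b * T), Nat.gcd_dvd_left _ _,
    hw.coprime_dvd_left (Nat.gcd_dvd_right _ _), ?_⟩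
  rw [hsum, gcd_val_natCast, Nat.gcd_mul_left]

theorem exists_units_natCast_mul_add_natCast_mul_eq (hab : a.Coprime b) (habn : a * b ∣ n)
    (hcase : Odd n ∨ Even (a * b)) {d : ℕ} (hd : d.Coprime (a * b)) {c : ZMod (g * n)}
    (hc : (g * n).gcd c.val = g * d) :
    ∃ s t : (ZMod (g * n))ˣ,
      ((g * a : ℕ) : ZMod (g * n)) * s + ((g * b : ℕ) : ZMod (g * n)) * t = c := by
  have hgn : g * n ≠ 0 := NeZero.ne _
  obtain ⟨y, hcy⟩ : g ∣ c.val := (Dvd.intro d hc.symm).trans (Nat.gcd_dvd_right _ c.val)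
  have hny : n.gcd y = d := Nat.eq_of_mul_eq_mul_left
    (Nat.pos_of_ne_zero (left_ne_zero_of_mul hgn)) (by rw [← Nat.gcd_mul_left, ← hcy, hc])
  have hyab : y.Coprime (a * b) :=
    Nat.eq_one_of_dvd_coprimes hd
      (hny ▸ Nat.dvd_gcd ((Nat.gcd_dvd_right _ _).trans habn) (Nat.gcd_dvd_left _ _))
      (Nat.gcd_dvd_right _ _)
  obtain ⟨s', t', hs', ht', hst⟩ :=
    exists_isUnit_mul_add_mul_eq hab hyab (right_ne_zero_of_mul hgn) hcase
  obtain ⟨s, hs⟩ := exists_unit_castHom_eq (dvd_mul_left n g) hs'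
  obtain ⟨t, ht⟩ := exists_unit_castHom_eq (dvd_mul_left n g) ht'
  refine ⟨s, t, ?_⟩
  calc ((g * a : ℕ) : ZMod (g * n)) * s + ((g * b : ℕ) : ZMod (g * n)) * t
      = (g : ZMod (g * n)) * (a * s + b * t) := by push_cast; ring
    _ = g * y := natCast_mul_eq_of_castHom_eq rfl (by
        rw [map_add, map_mul, map_mul, map_natCast, map_natCast, map_natCast, hs, ht, hst])
    _ = c := by rw [← Nat.cast_mul, ← hcy, natCast_zmod_val]

theorem exists_units_natCast_mul_add_natCast_mul_eq_iff (ha : a ∣ n) (hb : b ∣ n)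
    (hab : a.Coprime b) (hcase : Odd n ∨ Even (a * b)) (c : ZMod (g * n)) :
    (∃ s t : (ZMod (g * n))ˣ,
        ((g * a : ℕ) : ZMod (g * n)) * s + ((g * b : ℕ) : ZMod (g * n)) * t = c) ↔
      ∃ d, (d ∣ n ∧ d.Coprime (a * b)) ∧ (g * n).gcd c.val = g * d := by
  constructor
  · rintro ⟨s, t, rfl⟩
    obtain ⟨d, hdn, hdc, hgcd⟩ := exists_gcd_val_natCast_mul_add_natCast_mul ha hb hab s t
    exact ⟨d, ⟨hdn, hdc⟩, hgcd⟩
  · rintro ⟨d, ⟨-, hd⟩, hc⟩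
    exact exists_units_natCast_mul_add_natCast_mul_eq hab (hab.mul_dvd_of_dvd_of_dvd ha hb)
      hcase hd hc

end SumOfAtoms

theorem stmt_18 (n a b : ℕ) (hn : 0 < n) (ha : a ∣ n) (hb : b ∣ n)
    (g : ℕ) (hg : g = Nat.gcd a b)
    (hcase : Odd (n / g) ∨ Even ((a / g) * (b / g)))
    (m₃ : ℕ)
    (hm₃ : m₃ ∣ (n / g) / ((a / g) * (b / g)) ∧ Nat.Coprime m₃ ((a / g) * (b / g)) ∧
      ∀ d : ℕ, d ∣ (n / g) / ((a / g) * (b / g)) → Nat.Coprime d ((a / g) * (b / g)) →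
        d ≤ m₃) :
    {c : ZMod n | ∃ u v : ZMod n,
        AddSubgroup.zmultiples u = AddSubgroup.zmultiples (a : ZMod n) ∧
        AddSubgroup.zmultiples v = AddSubgroup.zmultiples (b : ZMod n) ∧
        u + v = c} =
      ⋃ d ∈ {d : ℕ | d ∣ m₃},
        {z : ZMod n | AddSubgroup.zmultiples z =
          AddSubgroup.zmultiples ((g * d : ℕ) : ZMod n)} ∧
    ∀ d₁ d₂ : ℕ, d₁ ∣ m₃ → d₂ ∣ m₃ → d₁ ≠ d₂ →
      Disjoint
        {z : ZMod n | AddSubgroup.zmultiples z =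
          AddSubgroup.zmultiples ((g * d₁ : ℕ) : ZMod n)}
        {z : ZMod n | AddSubgroup.zmultiples z =
          AddSubgroup.zmultiples ((g * d₂ : ℕ) : ZMod n)} := by
  have hg0 : 0 < g := hg ▸ Nat.gcd_pos_of_pos_left b (Nat.pos_of_dvd_of_pos ha hn)
  have hga : g ∣ a := hg ▸ Nat.gcd_dvd_left a b
  have hgb : g ∣ b := hg ▸ Nat.gcd_dvd_right a b
  obtain ⟨n', rfl⟩ := hga.trans ha
  obtain ⟨a', rfl⟩ := hga
  obtain ⟨b', rfl⟩ := hgb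
  simp only [Nat.mul_div_cancel_left _ hg0] at hcase hm₃
  have : NeZero (g * n') := ⟨hn.ne'⟩
  have hab : a'.Coprime b' :=
    Nat.eq_of_mul_eq_mul_left hg0 (by rw [← Nat.gcd_mul_left, ← hg, mul_one])
  have ha' : a' ∣ n' := Nat.dvd_of_mul_dvd_mul_left hg0 ha
  have hb' : b' ∣ n' := Nat.dvd_of_mul_dvd_mul_left hg0 hb
  have hmax : ∀ d, d ∣ n' ∧ d.Coprime (a' * b') ↔ d ∣ m₃ := fun d =>
    Nat.dvd_and_coprime_iff_dvd_of_isGreatest_div (right_ne_zero_of_mul hn.ne')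
      (hab.mul_dvd_of_dvd_of_dvd ha' hb')
      ⟨⟨hm₃.1, hm₃.2.1⟩, fun d hd => hm₃.2.2 d hd.1 hd.2⟩
  have hatom : ∀ d, d ∣ m₃ → ∀ z : ZMod (g * n'),
      zmultiples z = zmultiples ((g * d : ℕ) : ZMod (g * n')) ↔ (g * n').gcd z.val = g * d :=
    fun d hd _ => zmultiples_eq_zmultiples_natCast_iff (Nat.mul_dvd_mul_left g ((hmax d).2 hd).1)
  refine ⟨Set.ext fun c => ?_,
    fun d₁ d₂ h₁ h₂ hne => Set.disjoint_left.2 fun z hz₁ hz₂ => ?_⟩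
  · have hc := exists_units_natCast_mul_add_natCast_mul_eq_iff ha' hb' hab hcase c
    simp only [hmax] at hc
    simp only [Set.mem_ofPred_eq, Set.mem_iUnion, exists_prop, exists_and_left,
      exists_exists_eq_and, zmultiples_eq_zmultiples_natCast_iff_exists_unit ha,
      zmultiples_eq_zmultiples_natCast_iff_exists_unit hb]
    exact hc.trans (exists_congr fun d => and_congr_right fun hd => (hatom d hd c).symm)
  · rw [Set.mem_ofPred_eq, hatom d₁ h₁] at hz₁
    rw [Set.mem_ofPred_eq, hatom d₂ h₂] at hz₂
    exact hne (Nat.eq_of_mul_eq_mul_left hg0 (hz₁.symm.trans hz₂))
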